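/- Maximum principle for the nonlocal Allen-Cahn equation: Let c ∈ C¹([0,T]; C⁰(𝕋ⁿ)) solve ∂_t c + L_η c + f'(c) = 0 on 𝕋ⁿ×[0,T], where L_η c(x) = ∫_{𝕋ⁿ} J̃_η(x−y)(c(x)−c(y)) dy with J̃_η ≥ 0, and f' satisfies f'(r) > 0 for r > R₀ and f'(r) < 0 for r < −R₀ for some R₀ ≥ 1. If |c(·,0)| ≤ R₀ on 𝕋ⁿ, then |c(x,t)| ≤ R₀ for all (x,t) ∈ 𝕋ⁿ × [0,T]. -/
import Mathlib


open MeasureTheory Real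

noncomputable section

/-- The fundamental cell [−π,π]ⁿ of the torus 𝕋ⁿ. -/
def Box (n : ℕ) : Set (Fin n → ℝ) := Set.univ.pi fun _ => Set.Icc (-π) π

/-- 2π-periodicity in each coordinate direction. -/
def TPeriodic {n : ℕ} (u : (Fin n → ℝ) → ℝ) : Prop :=
  ∀ (x : Fin n → ℝ) (m : Fin n → ℤ), u (x + fun i => 2 * π * (m i)) = u x

/-- The nonlocal operator L_η u(x) = ∫_{𝕋ⁿ} J̃_η(x−y)(u(x)−u(y)) dy. -/
def Lop {n : ℕ} (Jt u : (Fin n → ℝ) → ℝ) (x : Fin n → ℝ) : ℝ :=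
  ∫ y in Box n, Jt (x - y) * (u x - u y)

/-- Auxiliary upper-bound maximum principle with abstract nonlinearity `g`. -/
lemma aux_upper {n : ℕ} {T : ℝ} (hT : 0 < T) (g : ℝ → ℝ) (R₀ : ℝ)
    (hg : ∀ r : ℝ, R₀ < r → 0 < g r)
    (Jt : (Fin n → ℝ) → ℝ) (hJpos : ∀ x, 0 ≤ Jt x)
    (c dc : ℝ → (Fin n → ℝ) → ℝ)
    (hper : ∀ t ∈ Set.Icc (0:ℝ) T, TPeriodic (c t))
    (hcont : Continuous fun q : ℝ × (Fin n → ℝ) => c q.1 q.2)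
    (hderiv : ∀ x : Fin n → ℝ, ∀ t ∈ Set.Icc (0:ℝ) T,
      HasDerivAt (fun s => c s x) (dc t x) t)
    (heq : ∀ t ∈ Set.Icc (0:ℝ) T, ∀ x : Fin n → ℝ,
      dc t x + Lop Jt (c t) x + g (c t x) = 0)
    (hinit : ∀ x : Fin n → ℝ, c 0 x ≤ R₀) :
    ∀ t ∈ Set.Icc (0:ℝ) T, ∀ x : Fin n → ℝ, c t x ≤ R₀ := by
  have hBc : IsCompact (Box n) := isCompact_univ_pi fun _ => isCompact_Icc
  have hBmeas : MeasurableSet (Box n) := MeasurableSet.univ_pi fun _ => measurableSet_Icc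
  have hKc : IsCompact (Set.Icc (0:ℝ) T ×ˢ Box n) := isCompact_Icc.prod hBc
  have h0B : (fun _ => 0 : Fin n → ℝ) ∈ Box n := by
    rw [Box, Set.mem_univ_pi]
    intro i
    exact ⟨by linarith [pi_pos], pi_pos.le⟩
  have hKne : (Set.Icc (0:ℝ) T ×ˢ Box n).Nonempty :=
    ⟨(0, fun _ => 0), Set.mk_mem_prod ⟨le_refl 0, hT.le⟩ h0B⟩
  obtain ⟨⟨t₀, x₀⟩, hK, hmax⟩ := hKc.exists_isMaxOn hKne hcont.continuousOn
  obtain ⟨ht₀, hx₀⟩ := hK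
  -- maximum value is at most R₀
  have hM : c t₀ x₀ ≤ R₀ := by
    by_contra h
    push_neg at h
    have ht0 : 0 < t₀ := by
      rcases ht₀.1.lt_or_eq with h' | h'
      · exact h'
      · exfalso
        have h0 : t₀ = 0 := h'.symm
        rw [h0] at h
        exact absurd (hinit x₀) (not_le.2 h)
    have hLop : 0 ≤ Lop Jt (c t₀) x₀ := by
      apply setIntegral_nonneg hBmeas
      intro y hy
      exact mul_nonneg (hJpos _) (sub_nonneg.2 (hmax (Set.mk_mem_prod ht₀ hy)))
    have hdc : 0 ≤ dc t₀ x₀ := by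
      have h' := hderiv x₀ t₀ ht₀
      rw [hasDerivAt_iff_tendsto_slope] at h'
      have h'' : Filter.Tendsto (slope (fun s => c s x₀) t₀) (nhdsWithin t₀ (Set.Iio t₀))
          (nhds (dc t₀ x₀)) :=
        h'.mono_left (nhdsWithin_mono t₀ fun a ha => ne_of_lt ha)
      refine ge_of_tendsto h'' ?_
      filter_upwards [Ioo_mem_nhdsLT_of_mem ⟨ht0, le_refl t₀⟩] with s hs
      have hsK : c s x₀ ≤ c t₀ x₀ :=
        hmax (Set.mk_mem_prod ⟨hs.1.le, hs.2.le.trans ht₀.2⟩ hx₀)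
      rw [slope_def_field]
      exact div_nonneg_iff.mpr (Or.inr ⟨sub_nonpos.2 hsK, by linarith [hs.2]⟩)
    have hgp := hg _ h
    have := heq t₀ ht₀ x₀
    linarith
  -- reduce a general point to the box via periodicity
  intro t ht x
  set m : Fin n → ℤ := fun i => round (x i / (2 * π)) with hm
  have hpi : (0:ℝ) < 2 * π := by linarith [pi_pos]
  have hy : (x - fun i => 2 * π * (m i)) ∈ Box n := by
    rw [Box, Set.mem_univ_pi]
    intro i
    have h1 : |x i / (2 * π) - (m i : ℝ)| ≤ 1/2 := abs_sub_round _
    have h2 : x i - 2 * π * (m i) = (2 * π) * (x i / (2 * π) - (m i : ℝ)) := by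
      field_simp
    have h3 : |x i - 2 * π * (m i)| ≤ π := by
      rw [h2, abs_mul, abs_of_pos hpi]
      calc (2 * π) * |x i / (2 * π) - (m i : ℝ)| ≤ (2 * π) * (1/2) :=
            mul_le_mul_of_nonneg_left h1 hpi.le
        _ = π := by ring
    have := abs_le.1 h3
    exact ⟨this.1, this.2⟩
  have hxy : c t ((x - fun i => 2 * π * (m i)) + fun i => 2 * π * (m i))
      = c t (x - fun i => 2 * π * (m i)) := hper t ht _ m
  have hsum : (x - fun i => 2 * π * (m i)) + (fun i => 2 * π * (m i)) = x := by
    funext i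
    simp
  rw [hsum] at hxy
  rw [hxy]
  exact le_trans (hmax (Set.mk_mem_prod ht hy)) hM

/-- maximum principle for the nonlocal Allen–Cahn equation.
If |c(·,0)| ≤ R₀ and ∂_t c + L_η c + f'(c) = 0 with J̃_η ≥ 0 and f' positive
beyond R₀ and negative below −R₀, then |c| ≤ R₀ for all times in [0,T]. -/
theorem nonlocal_allen_cahn_maximum_principle (n : ℕ) (T : ℝ) (hT : 0 < T)
    (f : ℝ → ℝ) (R₀ : ℝ) (hR₀ : 1 ≤ R₀)
    (hfpos : ∀ r : ℝ, R₀ < r → 0 < deriv f r)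
    (hfneg : ∀ r : ℝ, r < -R₀ → deriv f r < 0)
    (Jt : (Fin n → ℝ) → ℝ) (hJpos : ∀ x, 0 ≤ Jt x) (hJper : TPeriodic Jt)
    (hJint : IntegrableOn Jt (Box n))
    (c dc : ℝ → (Fin n → ℝ) → ℝ)
    (hper : ∀ t ∈ Set.Icc (0:ℝ) T, TPeriodic (c t))
    (hcont : Continuous fun q : ℝ × (Fin n → ℝ) => c q.1 q.2)
    (hderiv : ∀ x : Fin n → ℝ, ∀ t ∈ Set.Icc (0:ℝ) T,
      HasDerivAt (fun s => c s x) (dc t x) t)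
    (heq : ∀ t ∈ Set.Icc (0:ℝ) T, ∀ x : Fin n → ℝ,
      dc t x + Lop Jt (c t) x + deriv f (c t x) = 0)
    (hinit : ∀ x : Fin n → ℝ, |c 0 x| ≤ R₀) :
    ∀ t ∈ Set.Icc (0:ℝ) T, ∀ x : Fin n → ℝ, |c t x| ≤ R₀ := by
  have hLneg : ∀ (u : (Fin n → ℝ) → ℝ) (x : Fin n → ℝ),
      Lop Jt (fun y => -(u y)) x = - Lop Jt u x := by
    intro u x
    simp only [Lop]
    rw [← integral_neg]
    congr 1
    funext y
    ring
  intro t ht x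
  rw [abs_le]
  constructor
  · -- lower bound, via aux_upper applied to -c
    have key := aux_upper hT (fun r => - deriv f (-r)) R₀
      (fun r hr => by
        show 0 < -deriv f (-r)
        have := hfneg (-r) (by linarith); linarith)
      Jt hJpos (fun s z => -(c s z)) (fun s z => -(dc s z))
      (fun s hs z mm => by
        show -(c s (z + fun i => 2 * π * (mm i))) = -(c s z)
        rw [hper s hs z mm])
      hcont.neg
      (fun z s hs => (hderiv z s hs).neg)
      (fun s hs z => by
        show -(dc s z) + Lop Jt (fun y => -(c s y)) z + -(deriv f (-(-(c s z)))) = 0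
        rw [neg_neg, hLneg]
        have := heq s hs z
        linarith)
      (fun z => by
        show -(c 0 z) ≤ R₀
        have := abs_le.1 (hinit z); linarith)
    have := key t ht x
    linarith
  · exact aux_upper hT (deriv f) R₀ hfpos Jt hJpos c dc hper hcont hderiv heq
      (fun z => (abs_le.1 (hinit z)).2) t ht x
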